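/- arXiv:2105.13568 — 5 statements merged into one kernel-verified Lean document; each statement's English description precedes it below -/
import Mathlib

section
/- There exist constants K > 0 and c > 0 such that for all reals x, y, z with x ≥ y ≥ √(2x) and x ≥ z ≥ K·x/y, one has Ψ(x,y) − Ψ(x−z,y) ≥ c·z/(log x)^ν. -/
noncomputable def Psi (x y : ℝ) : ℕ :=
  {n : ℕ | 0 < n ∧ (n : ℝ) ≤ x ∧ ∀ p : ℕ, p.Prime → p ∣ n → (p : ℝ) ≤ y}.ncard

/-- ν = inf_{u>1} (2^u − 1)/(u − 1) -/
noncomputable def nu : ℝ := sInf ((fun u : ℝ => (2 ^ u - 1) / (u - 1)) '' Set.Ioi 1)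

/-!
Let `P` be the primes in `(m, 2m]` for the scale `m = ⌊min (y / 2) (z / 4)⌋`; as `y² ≥ 2x` and
`z ≥ K x / y`, every `p ∈ P` has `x / p ≤ y`. So a multiple `n = p k ∈ (x - z, x]` of `p ∈ P` is
`y`-smooth, as `p ≤ 2m ≤ y` and `k ≤ x / p ≤ y`, and each `p` has at least `z / p - 1 ≥ z / (4m)`
such multiples. Chebyshev's bound `#P ≥ m / (5 log 2m)`, read off the factorisation of `C(2m, m)`,
and the fact that `n ≤ x` has at most `log x / log 2` prime factors give by double counting at
least `z / (40 (log x)²)` smooth numbers in `(x - z, x]`. As `ν ≥ 2`, this beats the claim.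
-/

open Finset Real

namespace Nat

lemma prod_range_pow_factorization_centralBinom_le {n : ℕ} (hn : 0 < n) :
    ∏ p ∈ range (2 * n / 3 + 1), p ^ (centralBinom n).factorization p ≤
      (2 * n) ^ Nat.sqrt (2 * n) * 4 ^ (2 * n / 3) := by
  set f := fun p => p ^ (centralBinom n).factorization p
  have h_primes : ∏ p ∈ primesLE (2 * n / 3), f p = ∏ p ∈ range (2 * n / 3 + 1), f p :=
    prod_filter_of_ne fun p _ hp => by_contra fun h =>
      hp (by simp [f, factorization_eq_zero_of_not_prime _ h])
  rw [← h_primes, ← prod_filter_mul_prod_filter_not _ (· ≤ Nat.sqrt (2 * n))]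
  gcongr ?_ * ?_
  · calc ∏ p ∈ primesLE (2 * n / 3) with p ≤ Nat.sqrt (2 * n), f p
        ≤ (2 * n) ^ #{p ∈ primesLE (2 * n / 3) | p ≤ Nat.sqrt (2 * n)} :=
          prod_le_pow_card _ _ _ fun p _ => pow_factorization_choose_le (by omega)
      _ ≤ (2 * n) ^ #(Ioc 0 (Nat.sqrt (2 * n))) := by
          gcongr
          · omega
          · intro p hp
            simp only [mem_filter, mem_primesLE] at hp
            exact mem_Ioc.2 ⟨hp.1.2.pos, hp.2⟩
      _ = (2 * n) ^ Nat.sqrt (2 * n) := by rw [Nat.card_Ioc, Nat.sub_zero]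
  · calc ∏ p ∈ primesLE (2 * n / 3) with ¬p ≤ Nat.sqrt (2 * n), f p
        ≤ ∏ p ∈ primesLE (2 * n / 3) with ¬p ≤ Nat.sqrt (2 * n), p :=
          prod_le_prod' fun p hp => by
            simp only [mem_filter, not_le] at hp
            exact (pow_le_pow_right₀ (prime_of_mem_primesLE hp.1).one_lt.le
              (factorization_choose_le_one (Nat.sqrt_lt'.1 hp.2))).trans_eq (pow_one p)
      _ ≤ primorial (2 * n / 3) :=
          prod_le_prod_of_subset_of_one_le' (filter_subset _ _)
            fun p hp _ => (prime_of_mem_primesLE hp).one_lt.le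
      _ ≤ 4 ^ (2 * n / 3) := primorial_le_four_pow _

lemma centralBinom_le_mul_pow_card_primes_Ioc {n : ℕ} (hn : 2 < n) :
    centralBinom n ≤ (2 * n) ^ Nat.sqrt (2 * n) * 4 ^ (2 * n / 3) *
      (2 * n) ^ #{p ∈ Ioc n (2 * n) | p.Prime} := by
  set P := {p ∈ Ioc n (2 * n) | p.Prime}
  set f := fun p => p ^ (centralBinom n).factorization p
  have h_disj : Disjoint (range (2 * n / 3 + 1)) P := by
    refine disjoint_left.2 fun p hp hp' => ?_
    simp only [P, mem_range, mem_filter, mem_Ioc] at hp hp'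
    omega
  -- primes in `(2n/3, n]` do not divide the central binomial coefficient
  have h_support : ∏ p ∈ range (2 * n / 3 + 1) ∪ P, f p = centralBinom n := by
    rw [← prod_pow_factorization_centralBinom n]
    refine prod_subset (fun p hp => ?_) fun p hp hp' => ?_
    · simp only [P, mem_union, mem_range, mem_filter, mem_Ioc] at hp ⊢
      omega
    · simp only [P, mem_union, mem_range, mem_filter, mem_Ioc, not_or, not_and] at hp hp'
      simp only [f]
      by_cases hprime : p.Prime
      · rw [factorization_centralBinom_of_two_mul_self_lt_three_mul (p := p) hn
          (by by_contra h; exact hp'.2 (by omega) hprime) (by omega), pow_zero]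
      · rw [factorization_eq_zero_of_not_prime _ hprime, pow_zero]
  rw [← h_support, prod_union h_disj]
  gcongr ?_ * ?_
  · exact prod_range_pow_factorization_centralBinom_le (by omega)
  · exact prod_le_pow_card _ _ _ fun p _ => pow_factorization_choose_le (by omega)

end Nat

lemma log_four_gt : 1.386 < log 4 := by
  rw [show (4 : ℝ) = 2 ^ 2 by norm_num, Real.log_pow]
  linarith [log_two_gt_d9]

-- With `s = (2n)^(1/4)` the left side is at most `4s + 4s³`, the right side exceeds `s⁴ / 8`.
lemma log_add_sqrt_mul_log_le {n : ℝ} (hn : 10 ^ 7 ≤ n) :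
    log n + √(2 * n) * log (2 * n) ≤ (log 4 / 3 - 1 / 5) * n := by
  set s := √√(2 * n)
  have hs_sq : s ^ 2 = √(2 * n) := Real.sq_sqrt (Real.sqrt_nonneg _)
  have hs_four : s ^ 4 = 2 * n := by
    rw [show s ^ 4 = (s ^ 2) ^ 2 by ring, hs_sq, Real.sq_sqrt (by positivity)]
  have hs : 40 ≤ s := by
    by_contra! h
    have : s ^ 4 < 40 ^ 4 := by gcongr
    linarith
  have h_log : log (2 * n) ≤ 4 * s := by
    rw [← hs_four, Real.log_pow]
    push_cast
    linarith [Real.log_le_sub_one_of_pos (by linarith : 0 < s)]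
  have h_log_n : log n ≤ log (2 * n) := Real.log_le_log (by positivity) (by linarith)
  have h_cubic : 4 * s + 4 * s ^ 3 ≤ (1.386 / 3 - 1 / 5) * (s ^ 4 / 2) := by nlinarith
  have := log_four_gt
  rw [← hs_sq]
  nlinarith [mul_le_mul_of_nonneg_left h_log (sq_nonneg s)]

theorem le_five_mul_card_primes_Ioc_mul_log {n : ℕ} (hn : 10 ^ 7 ≤ n) :
    (n : ℝ) ≤ 5 * #{p ∈ Ioc n (2 * n) | p.Prime} * log (2 * n) := by
  set k := #{p ∈ Ioc n (2 * n) | p.Prime}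
  have h_nat : 4 ^ n ≤ n * ((2 * n) ^ Nat.sqrt (2 * n) * 4 ^ (2 * n / 3) * (2 * n) ^ k) :=
    (Nat.four_pow_lt_mul_centralBinom n (by omega)).le.trans
      (Nat.mul_le_mul_left n (Nat.centralBinom_le_mul_pow_card_primes_Ioc (by omega)))
  have hn_pos : (0 : ℝ) < n := by positivity
  have h_log : (n : ℝ) * log 4 ≤ log n + Nat.sqrt (2 * n) * log (2 * n) +
      (2 * n / 3 : ℕ) * log 4 + k * log (2 * n) := by
    have := Real.log_le_log (by positivity) (Nat.cast_le.2 h_nat)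
    push_cast at this
    rw [Real.log_mul (by positivity) (by positivity), Real.log_mul (by positivity) (by positivity),
      Real.log_mul (by positivity) (by positivity), Real.log_pow, Real.log_pow, Real.log_pow,
      Real.log_pow] at this
    linarith
  have h_sqrt : (Nat.sqrt (2 * n) : ℝ) ≤ √(2 * n) := mod_cast Real.nat_sqrt_le_real_sqrt
  have h_div : ((2 * n / 3 : ℕ) : ℝ) ≤ 2 * n / 3 := by exact_mod_cast Nat.cast_div_le
  have h_log_pos : 0 ≤ log (2 * (n : ℝ)) := Real.log_nonneg (by norm_cast; omega)
  have := log_add_sqrt_mul_log_le (n := n) (by exact_mod_cast hn)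
  have := log_four_gt
  nlinarith [mul_le_mul_of_nonneg_right h_sqrt h_log_pos]

lemma Nat.card_Ioc_filter_dvd {a b : ℕ} (hab : a ≤ b) (p : ℕ) :
    #{n ∈ Ioc a b | p ∣ n} = b / p - a / p := by
  rw [← Nat.Ioc_filter_dvd_card_eq_div b, ← Nat.Ioc_filter_dvd_card_eq_div a,
    ← Ioc_union_Ioc_eq_Ioc (Nat.zero_le a) hab, filter_union,
    card_union_of_disjoint (disjoint_filter_filter (Ioc_disjoint_Ioc_of_le le_rfl))]
  omega

lemma sub_div_sub_one_le_card_filter_dvd {a b : ℝ} (ha : 0 ≤ a) (hab : a ≤ b) (p : ℕ) :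
    (b - a) / p - 1 ≤ #{n ∈ Ioc ⌊a⌋₊ ⌊b⌋₊ | p ∣ n} := by
  have h_le : ⌊a⌋₊ / p ≤ ⌊b⌋₊ / p := Nat.div_le_div_right (Nat.floor_mono hab)
  rw [Nat.card_Ioc_filter_dvd (Nat.floor_mono hab), Nat.cast_sub h_le,
    ← Nat.floor_div_natCast, ← Nat.floor_div_natCast, sub_div]
  have := Nat.lt_floor_add_one (b / p)
  have := Nat.floor_le (div_nonneg ha p.cast_nonneg)
  linarith

lemma card_filter_dvd_mul_log_two_le_log {T : Finset ℕ} (hT : ∀ p ∈ T, p.Prime) {n : ℕ}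
    (hn : n ≠ 0) : #{p ∈ T | p ∣ n} * log 2 ≤ log n := by
  have h_pow : 2 ^ #{p ∈ T | p ∣ n} ≤ n :=
    calc 2 ^ #{p ∈ T | p ∣ n} ≤ ∏ p ∈ T with p ∣ n, p :=
          pow_card_le_prod _ _ _ fun p hp => (hT p (mem_filter.1 hp).1).two_le
      _ ≤ n := Nat.le_of_dvd (Nat.pos_of_ne_zero hn) <| prod_primes_dvd n
          (fun p hp => (hT p (mem_filter.1 hp).1).prime) fun p hp => (mem_filter.1 hp).2
  rw [← Real.log_pow]
  exact Real.log_le_log (by positivity) (by exact_mod_cast h_pow)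

def IsSmooth (y : ℝ) (n : ℕ) : Prop := ∀ p : ℕ, p.Prime → p ∣ n → (p : ℝ) ≤ y

lemma isSmooth_of_dvd_of_le_mul {n d : ℕ} {y : ℝ} (hn : n ≠ 0) (hdn : d ∣ n)
    (hdy : (d : ℝ) ≤ y) (hny : (n : ℝ) ≤ d * y) : IsSmooth y n := by
  intro q hq hqn
  obtain ⟨k, rfl⟩ := hdn
  have hd : 0 < d := Nat.pos_of_ne_zero (left_ne_zero_of_mul hn)
  rcases (Nat.Prime.dvd_mul hq).1 hqn with hqd | hqk
  · exact le_trans (mod_cast Nat.le_of_dvd hd hqd) hdy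
  · have hky : (k : ℝ) ≤ y := by
      push_cast at hny
      exact le_of_mul_le_mul_left hny (by exact_mod_cast hd)
    exact le_trans (mod_cast Nat.le_of_dvd (Nat.pos_of_ne_zero (right_ne_zero_of_mul hn)) hqk) hky

section Counting

open scoped Classical

lemma Psi_eq_card {x : ℝ} (hx : 0 ≤ x) (y : ℝ) :
    Psi x y = #{n ∈ Ioc 0 ⌊x⌋₊ | IsSmooth y n} := by
  rw [Psi, ← Set.ncard_coe_finset]
  congr 1
  ext n
  rw [mem_coe, mem_filter, mem_Ioc, Nat.le_floor_iff hx, and_assoc]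
  rfl

lemma Psi_sub_Psi {a b : ℝ} (ha : 0 ≤ a) (hab : a ≤ b) (y : ℝ) :
    (Psi b y : ℝ) - Psi a y = #{n ∈ Ioc ⌊a⌋₊ ⌊b⌋₊ | IsSmooth y n} := by
  rw [Psi_eq_card (ha.trans hab), Psi_eq_card ha, ← Ioc_union_Ioc_eq_Ioc (Nat.zero_le _)
    (Nat.floor_mono hab), filter_union,
    card_union_of_disjoint (disjoint_filter_filter (Ioc_disjoint_Ioc_of_le le_rfl))]
  push_cast
  ring

lemma sub_div_sub_one_le_card_filter_isSmooth_dvd {x y z : ℝ} {p : ℕ} (hpy : (p : ℝ) ≤ y)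
    (hxp : x ≤ p * y) (hz : 0 ≤ z) (hzx : z ≤ x) :
    z / p - 1 ≤ #{n ∈ {n ∈ Ioc ⌊x - z⌋₊ ⌊x⌋₊ | IsSmooth y n} | p ∣ n} := by
  have h_sub : {n ∈ Ioc ⌊x - z⌋₊ ⌊x⌋₊ | p ∣ n} ⊆
      {n ∈ {n ∈ Ioc ⌊x - z⌋₊ ⌊x⌋₊ | IsSmooth y n} | p ∣ n} := by
    intro n hn
    simp only [mem_filter, mem_Ioc] at hn ⊢
    have hnx : (n : ℝ) ≤ x := (Nat.le_floor_iff (hz.trans hzx)).1 hn.1.2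
    exact ⟨⟨hn.1, isSmooth_of_dvd_of_le_mul (by omega) hn.2 hpy (hnx.trans hxp)⟩, hn.2⟩
  have h_count := sub_div_sub_one_le_card_filter_dvd (sub_nonneg.2 hzx) (sub_le_self x hz) p
  rw [sub_sub_cancel] at h_count
  exact h_count.trans (by exact_mod_cast card_le_card h_sub)

theorem le_Psi_sub_Psi_of_scale {x y z : ℝ} {m : ℕ} (hm : 10 ^ 7 ≤ m)
    (hxm : x ≤ (m + 1) * y) (hmy : 2 * m ≤ y) (hmz : 4 * m ≤ z) (hzx : z ≤ x) :
    z / (40 * log x ^ 2) ≤ (Psi x y : ℝ) - Psi (x - z) y := by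
  set P := {p ∈ Ioc m (2 * m) | p.Prime}
  set S := {n ∈ Ioc ⌊x - z⌋₊ ⌊x⌋₊ | IsSmooth y n}
  have hm_pos : (10 ^ 7 : ℝ) ≤ m := by exact_mod_cast hm
  have hx_pos : 0 < x := by linarith
  have hz : 0 ≤ z := by linarith
  have h_multiples : ∀ p ∈ P, z / (4 * m) ≤ #(S.bipartiteAbove (· ∣ ·) p) := by
    intro p hp
    simp only [P, mem_filter, mem_Ioc] at hp
    have hp_low : (m : ℝ) + 1 ≤ p := by exact_mod_cast hp.1.1
    have hp_high : (p : ℝ) ≤ 2 * m := by exact_mod_cast hp.1.2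
    have hp_pos : (0 : ℝ) < p := by linarith
    refine le_trans ?_ (sub_div_sub_one_le_card_filter_isSmooth_dvd (by linarith)
      (hxm.trans (by gcongr; linarith)) hz hzx)
    rw [div_sub_one hp_pos.ne', div_le_div_iff₀ (by positivity) hp_pos]
    nlinarith
  have h_divisors : ∀ n ∈ S, (#(P.bipartiteBelow (· ∣ ·) n) : ℝ) ≤ log x / log 2 := by
    intro n hn
    simp only [S, mem_filter, mem_Ioc] at hn
    rw [le_div_iff₀ (log_pos one_lt_two)]
    exact (card_filter_dvd_mul_log_two_le_log (fun p hp => (mem_filter.1 hp).2) (by omega)).trans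
      (Real.log_le_log (by norm_cast; omega) ((Nat.le_floor_iff hx_pos.le).1 hn.1.2))
  have h_double := card_nsmul_le_card_nsmul (· ∣ ·) h_multiples h_divisors
  rw [nsmul_eq_mul, nsmul_eq_mul] at h_double
  have h_log_pos : 0 < log x := Real.log_pos (by linarith)
  have h_cheb : m / (5 * log x) ≤ #P := by
    have h_log_le : log (2 * m) ≤ log x := Real.log_le_log (by positivity) (by nlinarith)
    rw [div_le_iff₀ (by positivity)]
    nlinarith [le_five_mul_card_primes_Ioc_mul_log hm]
  rw [Psi_sub_Psi (sub_nonneg.2 hzx) (sub_le_self x hz)]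
  calc z / (40 * log x ^ 2) = m / (5 * log x) * (z / (4 * m)) / (2 * log x) := by
        field_simp
        ring
    _ ≤ #P * (z / (4 * m)) / (2 * log x) := by gcongr
    _ ≤ #S * (log x / log 2) / (2 * log x) := by gcongr
    _ = #S / (2 * log 2) := by field_simp
    _ ≤ #S := div_le_self (by positivity) (by linarith [log_two_gt_d9])

end Counting

-- the tangent line of `2 ^ u` at `u = 2` already lies above `2u - 1` on `(1, ∞)`
lemma two_le_two_rpow_sub_one_div {u : ℝ} (hu : 1 < u) : 2 ≤ (2 ^ u - 1) / (u - 1) := by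
  rw [le_div_iff₀ (by linarith), rpow_def_of_pos two_pos,
    show log 2 * u = 2 * log 2 + (u - 2) * log 2 by ring, exp_add, ← log_rpow two_pos,
    exp_log (by positivity)]
  have := add_one_le_exp ((u - 2) * log 2)
  nlinarith [log_two_gt_d9, log_two_lt_d9]

lemma two_le_nu : 2 ≤ nu :=
  le_csInf (Set.image_nonempty.2 Set.nonempty_Ioi)
    (Set.forall_mem_image.2 fun _ hu => two_le_two_rpow_sub_one_div hu)

lemma sq_le_rpow_nu {t : ℝ} (ht : 1 ≤ t) : t ^ 2 ≤ t ^ nu := by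
  rw [← rpow_natCast]
  exact rpow_le_rpow_of_exponent_le ht (by exact_mod_cast two_le_nu)

theorem le_Psi_sub_Psi {x y z : ℝ} (hxy : 2 * x ≤ y ^ 2) (hxz : 4 * x ≤ z * y)
    (hy : 2 * 10 ^ 7 ≤ y) (hz : 4 * 10 ^ 7 ≤ z) (hzx : z ≤ x) :
    z / (40 * log x ^ 2) ≤ (Psi x y : ℝ) - Psi (x - z) y := by
  set w := min (y / 2) (z / 4)
  have hw : 0 ≤ w := le_min (by linarith) (by linarith)
  have hxw : x ≤ w * y := by
    simp only [w, min_mul_of_nonneg _ _ (by linarith : 0 ≤ y)]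
    exact le_min (by nlinarith) (by nlinarith)
  refine le_Psi_sub_Psi_of_scale (m := ⌊w⌋₊)
    (Nat.le_floor (le_min (by push_cast; linarith) (by push_cast; linarith)))
    (hxw.trans (by gcongr; exact (Nat.lt_floor_add_one w).le)) ?_ ?_ hzx
  · linarith [Nat.floor_le hw, min_le_left (y / 2) (z / 4)]
  · linarith [Nat.floor_le hw, min_le_right (y / 2) (z / 4)]

theorem stmt1 :
    ∃ K > (0 : ℝ), ∃ c > (0 : ℝ), ∀ x y z : ℝ,
      y ≤ x → Real.sqrt (2 * x) ≤ y → z ≤ x → K * x / y ≤ z →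
      c * z / Real.log x ^ nu ≤ (Psi x y : ℝ) - (Psi (x - z) y : ℝ) := by
  refine ⟨10 ^ 15, by norm_num, 1 / 40, by norm_num, fun x y z hyx hxy hzx hz => ?_⟩
  rcases le_or_gt x 0 with hx | hx
  · have : 0 ≤ z := (div_nonneg_of_nonpos (by linarith) (hyx.trans hx)).trans hz
    obtain rfl : z = 0 := by linarith
    simp
  have hy : 0 < y := (Real.sqrt_pos.2 (by linarith)).trans_le hxy
  have hxy_sq : 2 * x ≤ y ^ 2 := by
    have := pow_le_pow_left₀ (Real.sqrt_nonneg _) hxy 2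
    rwa [Real.sq_sqrt (by linarith)] at this
  have hxz : 10 ^ 15 * x ≤ z * y := (div_le_iff₀ hy).1 hz
  have hz_big : 10 ^ 15 ≤ z := by nlinarith
  have h_log : 1 ≤ log x := by
    rw [Real.le_log_iff_exp_le hx]
    linarith [Real.exp_one_lt_d9]
  calc 1 / 40 * z / log x ^ nu ≤ z / (40 * log x ^ 2) := by
        rw [div_le_div_iff₀ (by positivity) (by positivity)]
        nlinarith [sq_le_rpow_nu h_log]
    _ ≤ _ := le_Psi_sub_Psi hxy_sq (by nlinarith) (by nlinarith) (by linarith) hzx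
end

section
/- For every integer m ≥ 2, with a_m = 1 − 1/m + (2 − 1/m)/(m^3 + m^2 + 2m − 1), k_m = 2/((m−1)^2(m+2)), l_m = 1 − (3m−2)/(m(m−1)(m+2)), and f(a) = 1 − a − a(1−a)^3 − 4.32·a(1−a)^5, one has the strict inequality (l_m + a_m(k_m − l_m))/(k_m + 1) < f(a_m). -/
/-!
With `x = m`, every quantity is a rational function of `x`, and clearing denominators gives
`f(a_m) - b(a_m, k_m, l_m) = P(x) / (25 D(x)^6)` with `D(x) = x^3 + x^2 + 2x - 1` and `P` of
degree 13. In the variable `t = x - 2` only the coefficients of `t^5, …, t^8` of `P` are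
negative, and they are dominated by their neighbours for `t ≥ 0`.
-/

noncomputable section

def crossoverA (x : ℝ) : ℝ := 1 - 1 / x + (2 - 1 / x) / (x ^ 3 + x ^ 2 + 2 * x - 1)

def crossoverK (x : ℝ) : ℝ := 2 / ((x - 1) ^ 2 * (x + 2))

def crossoverL (x : ℝ) : ℝ := 1 - (3 * x - 2) / (x * (x - 1) * (x + 2))

def curveF (a : ℝ) : ℝ := 1 - a - a * (1 - a) ^ 3 - 4.32 * a * (1 - a) ^ 5

def lineB (a k l : ℝ) : ℝ := (l + a * (k - l)) / (k + 1)

end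

def gapNumerator (x : ℝ) : ℝ :=
  17 * x ^ 13 - 115 * x ^ 12 + 87 * x ^ 11 + 188 * x ^ 10 + 970 * x ^ 9 - 8 * x ^ 8
    + 215 * x ^ 7 - 1493 * x ^ 6 + 758 * x ^ 5 - 300 * x ^ 4 + 1150 * x ^ 3 - 875 * x ^ 2
    + 250 * x - 25

lemma curveF_sub_lineB {x : ℝ} (hx : 1 < x) :
    curveF (crossoverA x) - lineB (crossoverA x) (crossoverK x) (crossoverL x) =
      gapNumerator x / (25 * (x ^ 3 + x ^ 2 + 2 * x - 1) ^ 6) := by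
  have hx0 : x ≠ 0 := by linarith
  have hx1 : x - 1 ≠ 0 := by linarith
  have hx2 : x + 2 ≠ 0 := by linarith
  -- `D(x)` in the Horner form to which `field_simp` normalises it
  have hD : x * (x * (x + 1) + 2) - 1 ≠ 0 := by
    nlinarith [mul_pos (by linarith : (0 : ℝ) < x) (by linarith : (0 : ℝ) < x + 1)]
  have hK : 2 + (x - 1) ^ 2 * (x + 2) ≠ 0 := by positivity
  unfold curveF lineB crossoverA crossoverK crossoverL gapNumerator
  field_simp
  ring

lemma gapNumerator_add_two_pos {t : ℝ} (ht : 0 ≤ t) : 0 < gapNumerator (t + 2) := by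
  have hshift : gapNumerator (t + 2) =
      491103 + 2119446 * t + 3860217 * t ^ 2 + 3698622 * t ^ 3 + 1732140 * t ^ 4
        - 15930 * t ^ 5 - 496275 * t ^ 6 - 267945 * t ^ 7 - 44540 * t ^ 8 + 15950 * t ^ 9
        + 10638 * t ^ 10 + 2631 * t ^ 11 + 327 * t ^ 12 + 17 * t ^ 13 := by
    unfold gapNumerator
    ring
  rw [hshift]
  nlinarith [mul_nonneg (pow_nonneg ht 4) (sq_nonneg (t ^ 2 - 6)),
    mul_nonneg (pow_nonneg ht 5) (sq_nonneg (t ^ 2 - 6)),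
    mul_nonneg (pow_nonneg ht 3) (sq_nonneg (t ^ 3 - 7)),
    pow_nonneg ht 2, pow_nonneg ht 3, pow_nonneg ht 4, pow_nonneg ht 9, pow_nonneg ht 10,
    pow_nonneg ht 11, pow_nonneg ht 12, pow_nonneg ht 13]

lemma lineB_lt_curveF {x : ℝ} (hx : 2 ≤ x) :
    lineB (crossoverA x) (crossoverK x) (crossoverL x) < curveF (crossoverA x) := by
  have hP : 0 < gapNumerator x := by
    simpa using gapNumerator_add_two_pos (sub_nonneg.2 hx)
  have hD : 0 < x ^ 3 + x ^ 2 + 2 * x - 1 := by nlinarith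
  rw [← sub_pos, curveF_sub_lineB (by linarith)]
  positivity

theorem stmt11 (m : ℕ) (hm : 2 ≤ m) (am km lm : ℝ)
    (ham : am = 1 - 1 / (m : ℝ) + (2 - 1 / (m : ℝ)) /
      ((m : ℝ) ^ 3 + (m : ℝ) ^ 2 + 2 * (m : ℝ) - 1))
    (hkm : km = 2 / (((m : ℝ) - 1) ^ 2 * ((m : ℝ) + 2)))
    (hlm : lm = 1 - (3 * (m : ℝ) - 2) / ((m : ℝ) * ((m : ℝ) - 1) * ((m : ℝ) + 2))) :
    (lm + am * (km - lm)) / (km + 1) <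
      1 - am - am * (1 - am) ^ 3 - 4.32 * am * (1 - am) ^ 5 := by
  subst ham hkm hlm
  exact lineB_lt_curveF (by exact_mod_cast hm)
end

section
/- For every real x ≥ 1, one has Ψ(x, √(2x)) − Ψ(x − 3x^{1/4}, √(2x)) ≥ 1; that is, the interval (x − 3x^{1/4}, x] contains a positive integer all of whose prime factors are at most √(2x). -/
theorem Psi_add_one_le {a x y : ℝ} {n : ℕ} (hn : 0 < n) (ha : a < n) (hx : (n : ℝ) ≤ x)
    (hy : ∀ p : ℕ, p.Prime → p ∣ n → (p : ℝ) ≤ y) : Psi a y + 1 ≤ Psi x y := by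
  have hfin : {n : ℕ | 0 < n ∧ (n : ℝ) ≤ x ∧ ∀ p : ℕ, p.Prime → p ∣ n → (p : ℝ) ≤ y}.Finite :=
    (Set.finite_Iic ⌊x⌋₊).subset fun k hk => Nat.le_floor hk.2.1
  have hsub : {n : ℕ | 0 < n ∧ (n : ℝ) ≤ a ∧ ∀ p : ℕ, p.Prime → p ∣ n → (p : ℝ) ≤ y} ⊆
      {n : ℕ | 0 < n ∧ (n : ℝ) ≤ x ∧ ∀ p : ℕ, p.Prime → p ∣ n → (p : ℝ) ≤ y} :=
    fun k hk => ⟨hk.1, hk.2.1.trans (ha.le.trans hx), hk.2.2⟩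
  exact Set.ncard_lt_ncard
    ((Set.ssubset_iff_of_subset hsub).2 ⟨n, ⟨hn, hx, hy⟩, fun hn' => hn'.2.1.not_gt ha⟩) hfin

theorem Nat.le_add_of_prime_dvd_sq_sub_sq {p m h : ℕ} (hp : p.Prime) (hhm : h < m)
    (hpd : p ∣ m ^ 2 - h ^ 2) : p ≤ m + h := by
  rw [Nat.sq_sub_sq] at hpd
  rcases hp.dvd_mul.1 hpd with hd | hd
  · exact Nat.le_of_dvd (by omega) hd
  · exact (Nat.le_of_dvd (by omega) hd).trans (by omega)

theorem exists_sq_sub_sq_near_sq {s : ℝ} (hs : 0 ≤ s) :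
    ∃ m h : ℕ, s ^ 2 - 2 * √(2 * s + 1) - 1 < (m : ℝ) ^ 2 - h ^ 2 ∧ (m : ℝ) ^ 2 - h ^ 2 ≤ s ^ 2 ∧
      (m : ℝ) + h < s + √(2 * s + 1) + 2 := by
  set m := ⌈s⌉₊
  have hsm : s ≤ m := Nat.le_ceil s
  have hms : (m : ℝ) < s + 1 := Nat.ceil_lt_add_one hs
  set r := √((m : ℝ) ^ 2 - s ^ 2)
  have hr0 : 0 ≤ r := Real.sqrt_nonneg _
  have hr2 : r ^ 2 = (m : ℝ) ^ 2 - s ^ 2 := Real.sq_sqrt (by nlinarith)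
  have hr : r < √(2 * s + 1) := Real.sqrt_lt_sqrt (by nlinarith) (by nlinarith)
  refine ⟨m, ⌈r⌉₊, ?_, ?_, ?_⟩
  · have hh : (⌈r⌉₊ : ℝ) < r + 1 := Nat.ceil_lt_add_one hr0
    nlinarith [Nat.cast_nonneg (α := ℝ) ⌈r⌉₊]
  · nlinarith [Nat.le_ceil r]
  · linarith [Nat.ceil_lt_add_one hr0]

theorem exists_smooth_near_pow_four_of_seven_le {u : ℝ} (hu : 7 ≤ u) :
    ∃ n : ℕ, 0 < n ∧ u ^ 4 - 3 * u < n ∧ (n : ℝ) ≤ u ^ 4 ∧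
      ∀ p : ℕ, p.Prime → p ∣ n → (p : ℝ) ^ 2 ≤ 2 * u ^ 4 := by
  obtain ⟨m, h, hlo, hhi, hsum⟩ := exists_sq_sub_sq_near_sq (sq_nonneg u)
  set t := √(2 * u ^ 2 + 1)
  have ht0 : 0 ≤ t := Real.sqrt_nonneg _
  have ht2 : t ^ 2 = 2 * u ^ 2 + 1 := Real.sq_sqrt (by positivity)
  have hdefect : 2 * t + 1 ≤ 3 * u := by nlinarith
  have hfactor : u ^ 2 + t + 2 ≤ 7 / 5 * u ^ 2 := by nlinarith
  have hhm : h < m := by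
    have : (h : ℝ) ^ 2 < (m : ℝ) ^ 2 := by nlinarith
    exact_mod_cast lt_of_pow_lt_pow_left₀ 2 (Nat.cast_nonneg _) this
  have hcast : ((m ^ 2 - h ^ 2 : ℕ) : ℝ) = (m : ℝ) ^ 2 - h ^ 2 := by
    rw [Nat.cast_sub (Nat.pow_le_pow_left hhm.le 2)]
    push_cast
    ring
  refine ⟨m ^ 2 - h ^ 2, Nat.sub_pos_of_lt (Nat.pow_lt_pow_left hhm two_ne_zero), ?_, ?_, ?_⟩
  · rw [hcast]
    nlinarith
  · rw [hcast]
    nlinarith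
  · intro p hp hpn
    have hpmh : (p : ℝ) ≤ m + h := by exact_mod_cast Nat.le_add_of_prime_dvd_sq_sub_sq hp hhm hpn
    nlinarith [Nat.cast_nonneg (α := ℝ) p]

def sqrtSmoothModulus (M : ℕ) : ℕ :=
  ((List.range' 1 69).filter fun b => b * b ≤ M).prod

theorem mul_self_le_of_prime_dvd_sqrtSmoothModulus_pow {p M e : ℕ} (hp : p.Prime)
    (hpd : p ∣ sqrtSmoothModulus M ^ e) : p * p ≤ M := by
  obtain ⟨b, hb, hpb⟩ := (Prime.dvd_prod_iff hp.prime).1 (hp.dvd_of_dvd_pow hpd)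
  rw [List.mem_filter, List.mem_range', decide_eq_true_iff] at hb
  have hpb' : p ≤ b := Nat.le_of_dvd (by omega) hpb
  exact (Nat.mul_le_mul hpb' hpb').trans hb.2

/-- Dividing `sqrtSmoothModulus (2 * N) ^ 12` certifies `√(2N)`-smoothness (exponent `12` suffices
below `2 ^ 12`), and `(k + 1) ^ 4 ≤ 81 * N` puts `N - k` above `N + 1 - 3 N^{1/4}`. -/
def windowCheck (N : ℕ) : Bool :=
  (List.range 21).any fun k =>
    decide (k < N) && decide ((k + 1) ^ 4 ≤ 81 * N) &&
      decide (N - k ∣ sqrtSmoothModulus (2 * N) ^ 12)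

theorem windowCheck_eq_true : (List.range' 1 2400).all windowCheck = true := by
  decide +kernel

theorem exists_smooth_near_of_le_2400 {N : ℕ} (hN1 : 1 ≤ N) (hN : N ≤ 2400) :
    ∃ k < N, (k + 1) ^ 4 ≤ 81 * N ∧ ∀ p : ℕ, p.Prime → p ∣ N - k → p * p ≤ 2 * N := by
  have hcheck := List.all_eq_true.1 windowCheck_eq_true N (List.mem_range'_1.2 ⟨hN1, by omega⟩)
  obtain ⟨k, -, hk⟩ := List.any_eq_true.1 hcheck
  simp only [Bool.and_eq_true, decide_eq_true_eq] at hk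
  obtain ⟨⟨hkN, hk4⟩, hdvd⟩ := hk
  exact ⟨k, hkN, hk4, fun p hp hpd =>
    mul_self_le_of_prime_dvd_sqrtSmoothModulus_pow hp (hpd.trans hdvd)⟩

theorem exists_smooth_near_pow_four_of_lt_seven {u : ℝ} (hu1 : 1 ≤ u) (hu7 : u < 7) :
    ∃ n : ℕ, 0 < n ∧ u ^ 4 - 3 * u < n ∧ (n : ℝ) ≤ u ^ 4 ∧
      ∀ p : ℕ, p.Prime → p ∣ n → (p : ℝ) ^ 2 ≤ 2 * u ^ 4 := by
  have hx0 : 0 ≤ u ^ 4 := by positivity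
  set N := ⌊u ^ 4⌋₊
  have hN1 : 1 ≤ N := Nat.le_floor (by exact_mod_cast one_le_pow₀ hu1)
  have hN : N ≤ 2400 := Nat.lt_succ_iff.1 <| (Nat.floor_lt hx0).2 <| by
    push_cast
    exact pow_lt_pow_left₀ hu7 (by linarith) four_ne_zero |>.trans_eq (by norm_num)
  have hNx : (N : ℝ) ≤ u ^ 4 := Nat.floor_le hx0
  obtain ⟨k, hkN, hk4, hsmooth⟩ := exists_smooth_near_of_le_2400 hN1 hN
  have hk : (k : ℝ) + 1 ≤ 3 * u := by
    refine (pow_le_pow_iff_left₀ (by positivity) (by positivity) four_ne_zero).1 ?_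
    calc ((k : ℝ) + 1) ^ 4 ≤ 81 * N := by exact_mod_cast hk4
      _ ≤ (3 * u) ^ 4 := by nlinarith
  refine ⟨N - k, by omega, ?_, ?_, ?_⟩
  · rw [Nat.cast_sub hkN.le]
    linarith [Nat.lt_floor_add_one (u ^ 4)]
  · exact (Nat.cast_le.2 (Nat.sub_le N k)).trans hNx
  · intro p hp hpd
    have hpN : ((p * p : ℕ) : ℝ) ≤ ((2 * N : ℕ) : ℝ) := Nat.cast_le.2 (hsmooth p hp hpd)
    push_cast at hpN
    nlinarith

theorem exists_smooth_near_pow_four {u : ℝ} (hu : 1 ≤ u) :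
    ∃ n : ℕ, 0 < n ∧ u ^ 4 - 3 * u < n ∧ (n : ℝ) ≤ u ^ 4 ∧
      ∀ p : ℕ, p.Prime → p ∣ n → (p : ℝ) ^ 2 ≤ 2 * u ^ 4 := by
  rcases lt_or_ge u 7 with hu7 | hu7
  · exact exists_smooth_near_pow_four_of_lt_seven hu hu7
  · exact exists_smooth_near_pow_four_of_seven_le hu7

theorem stmt12 (x : ℝ) (hx : 1 ≤ x) :
    (1 : ℝ) ≤ (Psi x (Real.sqrt (2 * x)) : ℝ) -
      (Psi (x - 3 * x ^ ((1 : ℝ) / 4)) (Real.sqrt (2 * x)) : ℝ) := by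
  set u := x ^ ((1 : ℝ) / 4)
  have hu4 : u ^ 4 = x := by
    rw [← Real.rpow_natCast, ← Real.rpow_mul (by linarith)]
    norm_num
  have hu1 : 1 ≤ u := Real.one_le_rpow hx (by norm_num)
  obtain ⟨n, hn, hlo, hhi, hsmooth⟩ := exists_smooth_near_pow_four hu1
  rw [hu4] at hlo hhi hsmooth
  have hPsi := Psi_add_one_le hn hlo hhi fun p hp hpn =>
    (Real.le_sqrt (Nat.cast_nonneg p) (by linarith)).2 (hsmooth p hp hpn)
  have hPsi' : (Psi (x - 3 * u) √(2 * x) : ℝ) + 1 ≤ Psi x √(2 * x) := by exact_mod_cast hPsi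
  linarith
end

section
/- If n ∈ 𝒜 and m is a positive integer all of whose prime factors are at most n, then mn ∈ 𝒜. -/
/-! Multiplying `n` by `m` can only enlarge each `smoothPartBelow · x`, so the prime factors of
`n` keep their bound. A new prime `p ∣ m` is at most `n`, and is already bounded by
`smoothPartBelow n p`: either every prime factor of `n` lies below `p`, and then that product is
`n ≥ p`; or the least prime factor `q > p` of `n` satisfies
`p < q ≤ smoothPartBelow n q = smoothPartBelow n p`, as no prime factor of `n` lies in `[p, q)`. -/

/-- The set 𝒜: n = 1, or n ≥ 2 with smallest prime factor 2 and each prime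
factor p of n bounded by the product of the smaller prime-power components of n. -/
def SetA : Set ℕ :=
  {n | n = 1 ∨ (0 < n ∧ 2 ∣ n ∧ ∀ p ∈ n.primeFactors, p ≠ 2 →
    p ≤ ∏ q ∈ n.primeFactors.filter (· < p), q ^ n.factorization q)}

def smoothPartBelow (n x : ℕ) : ℕ :=
  ∏ q ∈ n.primeFactors.filter (· < x), q ^ n.factorization q

theorem mem_SetA_iff {n : ℕ} : n ∈ SetA ↔
    n = 1 ∨ (0 < n ∧ 2 ∣ n ∧ ∀ p ∈ n.primeFactors, p ≠ 2 → p ≤ smoothPartBelow n p) :=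
  Iff.rfl

theorem smoothPartBelow_le_of_dvd {d N : ℕ} (hd : d ∣ N) (hN : N ≠ 0) (x : ℕ) :
    smoothPartBelow d x ≤ smoothPartBelow N x := by
  have hd0 : d ≠ 0 := ne_zero_of_dvd_ne_zero hN hd
  have hpos : ∀ q ∈ N.primeFactors.filter (· < x), 0 < q :=
    fun q hq => (Nat.prime_of_mem_primeFactors (Finset.mem_filter.mp hq).1).pos
  have hsub : d.primeFactors.filter (· < x) ⊆ N.primeFactors.filter (· < x) :=
    Finset.filter_subset_filter _ (Nat.primeFactors_mono hd hN)
  calc smoothPartBelow d x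
      ≤ ∏ q ∈ d.primeFactors.filter (· < x), q ^ N.factorization q :=
        Finset.prod_le_prod' fun q hq => Nat.pow_le_pow_right (hpos q (hsub hq))
          ((Nat.factorization_le_iff_dvd hd0 hN).mpr hd q)
    _ ≤ smoothPartBelow N x :=
        Finset.prod_le_prod_of_subset_of_one_le' hsub fun q hq _ =>
          Nat.one_le_pow _ _ (hpos q hq)

theorem smoothPartBelow_eq_self {n x : ℕ} (hn : n ≠ 0) (h : ∀ q ∈ n.primeFactors, q < x) :
    smoothPartBelow n x = n := by
  rw [smoothPartBelow, Finset.filter_true_of_mem h, ← Nat.prod_primeFactors_pow_factorization hn]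

theorem smoothPartBelow_congr {n x y : ℕ} (hxy : x ≤ y)
    (h : ∀ q ∈ n.primeFactors, x ≤ q → y ≤ q) : smoothPartBelow n x = smoothPartBelow n y := by
  unfold smoothPartBelow
  congr 1
  refine Finset.filter_congr fun q hq => ⟨fun hqx => hqx.trans_le hxy, fun hqy => ?_⟩
  by_contra! hxq
  exact absurd (h q hq hxq) (not_le.mpr hqy)

theorem le_smoothPartBelow_of_not_mem {n p : ℕ} (hn : n ≠ 0)
    (hP : ∀ q ∈ n.primeFactors, q ≠ 2 → q ≤ smoothPartBelow n q)
    (hp : p.Prime) (hpn : p ∉ n.primeFactors) (hle : p ≤ n) : p ≤ smoothPartBelow n p := by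
  have hne : ∀ q ∈ n.primeFactors, q ≠ p := fun q hq hqp => hpn (hqp ▸ hq)
  by_cases hq : ∃ q, q ∈ n.primeFactors ∧ p < q
  · obtain ⟨hqn, hpq⟩ := Nat.find_spec hq
    have hgap : ∀ r ∈ n.primeFactors, p ≤ r → Nat.find hq ≤ r := fun r hr hpr =>
      Nat.find_min' hq ⟨hr, hpr.lt_of_ne (hne r hr).symm⟩
    calc p ≤ Nat.find hq := hpq.le
      _ ≤ smoothPartBelow n (Nat.find hq) := hP _ hqn (by have := hp.two_le; omega)
      _ = smoothPartBelow n p := (smoothPartBelow_congr hpq.le hgap).symm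
  · push Not at hq
    rwa [smoothPartBelow_eq_self hn fun q hq' => (hq q hq').lt_of_ne (hne q hq')]

theorem stmt14 (n m : ℕ) (hn : n ∈ SetA) (hm : 0 < m)
    (h : ∀ p : ℕ, p.Prime → p ∣ m → p ≤ n) : m * n ∈ SetA := by
  rcases mem_SetA_iff.mp hn with rfl | ⟨hn0, h2, hP⟩
  · have hm1 : m = 1 := Nat.eq_one_iff_not_exists_prime_dvd.mpr fun p hp hpm =>
      absurd (h p hp hpm) (not_le.mpr hp.one_lt)
    simp [hm1, SetA]
  have hmn : m * n ≠ 0 := (Nat.mul_pos hm hn0).ne'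
  refine mem_SetA_iff.mpr (Or.inr ⟨Nat.pos_of_ne_zero hmn, h2.mul_left m, fun p hp hp2 => ?_⟩)
  have hpp : p.Prime := Nat.prime_of_mem_primeFactors hp
  refine le_trans ?_ (smoothPartBelow_le_of_dvd (dvd_mul_left n m) hmn p)
  by_cases hpn : p ∈ n.primeFactors
  · exact hP p hpn hp2
  have hpm : p ∣ m := by
    rw [Nat.primeFactors_mul hm.ne' hn0.ne', Finset.mem_union] at hp
    exact Nat.dvd_of_mem_primeFactors (hp.resolve_right hpn)
  exact le_smoothPartBelow_of_not_mem hn0.ne' hP hpp hpn (h p hpp hpm)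
end

section
/- Let x ≥ 1 be real, let n ∈ 𝒜 with n ≥ 2x^{1/3}, and let m be a positive integer such that x/2 ≤ mn ≤ x and every prime factor of m is at most (x/n)^{3/4}. Then mn ∈ 𝒜. -/
theorem Finsupp.filter_le_self {α : Type*} (f : α →₀ ℕ) (P : α → Prop) [DecidablePred P] :
    f.filter P ≤ f := fun a ↦ by
  rw [Finsupp.filter_apply]; split_ifs <;> simp

namespace Nat

def smoothPart (p N : ℕ) : ℕ := (N.factorization.filter (· < p)).prod (· ^ ·)

def roughPart (p N : ℕ) : ℕ := (N.factorization.filter (¬ · < p)).prod (· ^ ·)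

variable {p N : ℕ}

theorem smoothPart_eq_prod (p N : ℕ) :
    smoothPart p N = ∏ q ∈ N.primeFactors.filter (· < p), q ^ N.factorization q := by
  rw [smoothPart, Finsupp.prod_filter_index, Finsupp.support_filter, support_factorization]

theorem smoothPart_mul_roughPart (hN : N ≠ 0) : smoothPart p N * roughPart p N = N := by
  rw [smoothPart, roughPart, Finsupp.prod_filter_mul_prod_filter_not,
    prod_factorization_pow_eq_self hN]

theorem factorization_smoothPart (p N : ℕ) :
    (smoothPart p N).factorization = N.factorization.filter (· < p) :=
  factorization_prod_pow_eq_self_of_le_factorization (Finsupp.filter_le_self _ _)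

theorem factorization_roughPart (p N : ℕ) :
    (roughPart p N).factorization = N.factorization.filter (¬ · < p) :=
  factorization_prod_pow_eq_self_of_le_factorization (Finsupp.filter_le_self _ _)

theorem smoothPart_dvd_smoothPart {M : ℕ} (h : N ∣ M) (hM : M ≠ 0) :
    smoothPart p N ∣ smoothPart p M := by
  refine prod_pow_dvd_of_le_factorization fun q ↦ ?_
  rw [factorization_smoothPart, Finsupp.filter_apply, Finsupp.filter_apply]
  split_ifs
  · exact (factorization_le_iff_dvd (ne_zero_of_dvd_ne_zero hM h) hM).2 h q
  · rfl

theorem smoothPart_eq_self (hN : N ≠ 0) (h : ∀ q ∈ N.primeFactors, q < p) :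
    smoothPart p N = N := by
  rw [smoothPart, (Finsupp.filter_eq_self_iff _ _).2, prod_factorization_pow_eq_self hN]
  exact fun q hq ↦ h q (support_factorization N ▸ Finsupp.mem_support_iff.2 hq)

theorem smoothPart_congr {p' : ℕ} (h : ∀ q ∈ N.primeFactors, q < p ↔ q < p') :
    smoothPart p N = smoothPart p' N := by
  rw [smoothPart, smoothPart]
  congr 1
  ext q
  rw [Finsupp.filter_apply, Finsupp.filter_apply]
  by_cases hq : q ∈ N.primeFactors
  · simp only [h q hq]
  · rw [← support_factorization] at hq
    simp [Finsupp.notMem_support_iff.1 hq]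

theorem le_of_mem_primeFactors_roughPart {q : ℕ} (hq : q ∈ (roughPart p N).primeFactors) :
    p ≤ q := by
  rw [← support_factorization, factorization_roughPart, Finsupp.support_filter,
    Finset.mem_filter] at hq
  exact not_lt.1 hq.2

theorem Prime.dvd_roughPart (hp : p.Prime) (hN : N ≠ 0) (hpN : p ∣ N) : p ∣ roughPart p N := by
  have hR : roughPart p N ≠ 0 := ne_zero_of_dvd_ne_zero hN ⟨smoothPart p N, by
    rw [mul_comm, smoothPart_mul_roughPart hN]⟩
  rw [hp.dvd_iff_one_le_factorization hR, factorization_roughPart, Finsupp.filter_apply,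
    if_pos (lt_irrefl p)]
  exact (hp.dvd_iff_one_le_factorization hN).1 hpN

theorem sq_le_of_forall_primeFactors_le {R : ℕ} (hpR : p ∣ R) (hR : R ≠ 0)
    (hR' : ∀ q ∈ R.primeFactors, p ≤ q) (hne : R ≠ p) : p ^ 2 ≤ R := by
  obtain ⟨R', rfl⟩ := hpR
  have hR'0 : R' ≠ 0 := by rintro rfl; simp at hR
  have hR'1 : R' ≠ 1 := by rintro rfl; simp at hne
  have : p ≤ R'.minFac := hR' _ <| mem_primeFactors.2
    ⟨minFac_prime hR'1, (minFac_dvd R').trans (dvd_mul_left R' p), hR⟩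
  rw [sq]
  exact Nat.mul_le_mul_left p (this.trans (minFac_le (pos_of_ne_zero hR'0)))

end Nat

open Nat

theorem le_smoothPart_of_mem_setA {n p q : ℕ} (hn : n ∈ SetA) (hp : 2 < p)
    (hq : q ∈ n.primeFactors) (hpq : p ≤ q) : p ≤ smoothPart p n := by
  have hex : ∃ q ∈ n.primeFactors, p ≤ q := ⟨q, hq, hpq⟩
  obtain ⟨hq₀, hpq₀⟩ := Nat.find_spec hex
  rcases hn with rfl | ⟨-, -, hA⟩
  · simp at hq
  -- no prime factor of `n` lies in `[p, Nat.find hex)`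
  have hsame : smoothPart (Nat.find hex) n = smoothPart p n := smoothPart_congr fun r hr ↦
    ⟨fun h ↦ not_le.1 fun h' ↦ Nat.find_min hex h ⟨hr, h'⟩, fun h ↦ h.trans_le hpq₀⟩
  calc p ≤ Nat.find hex := hpq₀
    _ ≤ smoothPart (Nat.find hex) n := by rw [smoothPart_eq_prod]; exact hA _ hq₀ (by omega)
    _ = smoothPart p n := hsame

theorem le_smoothPart_mul_of_forall_primeFactors_lt {m n p : ℕ} (hm : 0 < m) (hn : 0 < n)
    (hmn : m ≤ n ^ 2) (hp : p.Prime) (hpN : p ∣ m * n) (hp2 : p ^ 2 ≤ m * n)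
    (hq : ∀ q ∈ n.primeFactors, q < p) : p ≤ smoothPart p (m * n) := by
  have hN : m * n ≠ 0 := by positivity
  have hPR := smoothPart_mul_roughPart (p := p) hN
  have hP0 := left_ne_zero_of_mul (hPR ▸ hN)
  by_contra! hlt
  have hnP : n ≤ smoothPart p (m * n) := by
    refine le_of_dvd (pos_of_ne_zero hP0) ?_
    simpa only [smoothPart_eq_self hn.ne' hq] using
      smoothPart_dvd_smoothPart (p := p) (dvd_mul_left n m) hN
  by_cases hRp : roughPart p (m * n) = p
  · rw [hRp] at hPR
    nlinarith
  · have hR := sq_le_of_forall_primeFactors_le (hp.dvd_roughPart hN hpN)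
      (right_ne_zero_of_mul (hPR ▸ hN)) (fun q hq ↦ le_of_mem_primeFactors_roughPart hq) hRp
    refine lt_irrefl (n * p ^ 2) ?_
    calc n * p ^ 2 ≤ m * n := hPR ▸ Nat.mul_le_mul hnP hR
      _ ≤ n ^ 2 * n := Nat.mul_le_mul_right n hmn
      _ = n * n ^ 2 := mul_comm _ _
      _ < n * p ^ 2 := Nat.mul_lt_mul_of_pos_left
          (Nat.pow_lt_pow_left (hnP.trans_lt hlt) two_ne_zero) hn

theorem mul_mem_setA {m n : ℕ} (hn : n ∈ SetA) (hm : 0 < m) (hmn : m ≤ n ^ 2)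
    (hpm : ∀ p, p.Prime → p ∣ m → p ^ 2 ≤ m * n) : m * n ∈ SetA := by
  rcases hn with rfl | ⟨hn0, h2n, hA⟩
  · left; simp at hmn; omega
  have hN : m * n ≠ 0 := by positivity
  refine Or.inr ⟨by positivity, dvd_mul_of_dvd_right h2n m, fun p hp hp2 ↦ ?_⟩
  have hpP := prime_of_mem_primeFactors hp
  have hpN := dvd_of_mem_primeFactors hp
  rw [← smoothPart_eq_prod]
  by_cases hq : ∃ q ∈ n.primeFactors, p ≤ q
  · obtain ⟨q, hq, hpq⟩ := hq
    have hPR := smoothPart_mul_roughPart (p := p) hN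
    calc p ≤ smoothPart p n := le_smoothPart_of_mem_setA (Or.inr ⟨hn0, h2n, hA⟩)
          (lt_of_le_of_ne hpP.two_le (Ne.symm hp2)) hq hpq
      _ ≤ smoothPart p (m * n) := le_of_dvd (pos_of_ne_zero (left_ne_zero_of_mul (hPR ▸ hN)))
          (smoothPart_dvd_smoothPart (dvd_mul_left n m) hN)
  push Not at hq
  have hpm' : p ∣ m := (hpP.dvd_mul.1 hpN).resolve_right fun h ↦
    (hq p (mem_primeFactors.2 ⟨hpP, h, hn0.ne'⟩)).false
  exact le_smoothPart_mul_of_forall_primeFactors_lt hm hn0 hmn hpP hpN (hpm p hpP hpm') hq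

theorem eight_mul_le_cube {x y : ℝ} (hx : 0 ≤ x) (h : 2 * x ^ ((1 : ℝ) / 3) ≤ y) :
    8 * x ≤ y ^ 3 :=
  calc 8 * x = (2 * x ^ ((1 : ℝ) / 3)) ^ 3 := by
        rw [mul_pow, ← Real.rpow_natCast (x ^ _), ← Real.rpow_mul hx]; norm_num
    _ ≤ y ^ 3 := pow_le_pow_left₀ (by positivity) h 3

theorem sq_le_of_le_rpow {x y N p : ℝ} (hx : 0 < x) (hy : 8 * x ≤ y ^ 3) (hp0 : 0 ≤ p)
    (hp : p ≤ (x / y) ^ ((3 : ℝ) / 4)) (hN : x / 2 ≤ N) : p ^ 2 ≤ N := by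
  have hy0 : 0 < y ^ 3 := by linarith
  have hy0' : 0 < y := (Odd.pow_pos_iff (by decide)).1 hy0
  have hp4 : p ^ 4 ≤ x ^ 3 / y ^ 3 :=
    calc p ^ 4 ≤ ((x / y) ^ ((3 : ℝ) / 4)) ^ 4 := pow_le_pow_left₀ hp0 hp 4
      _ = x ^ 3 / y ^ 3 := by
        rw [← Real.rpow_natCast (_ ^ _), ← Real.rpow_mul (div_nonneg hx.le hy0'.le), ← div_pow,
          ← Real.rpow_natCast (x / y)]
        norm_num
  have : x ^ 3 / y ^ 3 ≤ x ^ 2 / 8 := by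
    rw [div_le_div_iff₀ hy0 (by norm_num)]; nlinarith
  nlinarith

theorem stmt15 (x : ℝ) (hx : 1 ≤ x) (n : ℕ) (hn : n ∈ SetA)
    (hn2 : 2 * x ^ ((1 : ℝ) / 3) ≤ (n : ℝ)) (m : ℕ) (hm : 0 < m)
    (h1 : x / 2 ≤ ((m * n : ℕ) : ℝ)) (h2 : ((m * n : ℕ) : ℝ) ≤ x)
    (hp : ∀ p : ℕ, p.Prime → p ∣ m → (p : ℝ) ≤ (x / (n : ℝ)) ^ ((3 : ℝ) / 4)) :
    m * n ∈ SetA := by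
  have hx0 : 0 < x := by linarith
  have hcube := eight_mul_le_cube hx0.le hn2
  refine mul_mem_setA hn hm ?_ fun p hpP hpm ↦ ?_
  · have hn0 : 0 < n := Nat.pos_of_ne_zero fun h ↦ by simp [h] at hcube; linarith
    have : m * n ≤ n ^ 3 := by exact_mod_cast h2.trans (by linarith : x ≤ (n : ℝ) ^ 3)
    exact Nat.le_of_mul_le_mul_right (by rwa [← pow_succ]) hn0
  · exact_mod_cast sq_le_of_le_rpow hx0 hcube p.cast_nonneg (hp p hpP hpm) h1
end
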